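/- Let τ be the ℚ-algebra automorphism of ℚ[v₁, v₂, v₃, v₄] determined by v₁ ↦ v₂, v₂ ↦ v₁, v₃ ↦ v₄, v₄ ↦ v₃ (the simultaneous exchange of the two pairs of variables). Then the subalgebra of τ-invariant polynomials equals the ℚ-subalgebra of ℚ[v₁, v₂, v₃, v₄] generated by the five elements u₁ := v₁ + v₂, u₂ := v₃ + v₄, u₃ := v₁² + v₂², u₄ := v₃² + v₄², and u₅ := v₁v₄ + v₂v₃. -/

import Mathlib

/-!
Put `d = v₁ - v₂` and `e = v₃ - v₄`, and let `A` be the algebra generated by the `uᵢ`. Since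
`d² = 2u₃ - u₁²`, `de = u₁u₂ - 2u₅` and `e² = 2u₄ - u₂²` lie in `A`, the module `A + Ad + Ae` is
a subalgebra; it contains `v₁, v₂ = (u₁ ± d)/2` and `v₃, v₄ = (u₂ ± e)/2`, so it is the whole
polynomial ring. As `τ` fixes `A` and negates `d` and `e`, a `τ`-invariant `a + bd + ce` has
`bd + ce = 0`.
-/

open MvPolynomial

namespace Subalgebra

variable {R B : Type*} [CommRing R] [CommRing B] [Algebra R B]

def extendByPair (A : Subalgebra R B) {d e : B} (hdd : d * d ∈ A) (hde : d * e ∈ A)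
    (hee : e * e ∈ A) : Subalgebra R B where
  carrier := {P | ∃ a ∈ A, ∃ b ∈ A, ∃ c ∈ A, P = a + b * d + c * e}
  mul_mem' := by
    rintro _ _ ⟨a, ha, b, hb, c, hc, rfl⟩ ⟨a', ha', b', hb', c', hc', rfl⟩
    refine ⟨a * a' + b * b' * (d * d) + (b * c' + c * b') * (d * e) + c * c' * (e * e), ?_,
      a * b' + b * a', ?_, a * c' + c * a', ?_, by ring⟩ <;> aesop
  add_mem' := by
    rintro _ _ ⟨a, ha, b, hb, c, hc, rfl⟩ ⟨a', ha', b', hb', c', hc', rfl⟩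
    exact ⟨a + a', add_mem ha ha', b + b', add_mem hb hb', c + c', add_mem hc hc', by ring⟩
  algebraMap_mem' r := ⟨algebraMap R B r, A.algebraMap_mem r, 0, A.zero_mem, 0, A.zero_mem,
    by simp⟩

theorem mem_of_mem_extendByPair_of_fixed [Invertible (2 : R)] {A : Subalgebra R B} {d e : B}
    {hdd : d * d ∈ A} {hde : d * e ∈ A} {hee : e * e ∈ A} {τ : B →ₐ[R] B}
    (hτA : ∀ a ∈ A, τ a = a) (hτd : τ d = -d) (hτe : τ e = -e) {P : B}
    (hP : P ∈ A.extendByPair hdd hde hee) (hτP : τ P = P) : P ∈ A := by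
  obtain ⟨a, ha, b, hb, c, hc, rfl⟩ := hP
  have hodd : (2 : R) • (b * d + c * e) = 0 := by
    rw [map_add, map_add, map_mul, map_mul, hτA a ha, hτA b hb, hτA c hc, hτd, hτe] at hτP
    rw [two_smul]
    linear_combination (-1 : B) * hτP
  have hanti : b * d + c * e = 0 := by
    rw [← one_smul R (b * d + c * e), ← invOf_mul_self (2 : R), mul_smul, hodd, smul_zero]
  rwa [add_assoc, hanti, add_zero]

end Subalgebra

section DoubleSwap

variable (R : Type*) [CommRing R]

def doubleSwapGenerators : Set (MvPolynomial (Fin 4) R) :=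
  {X 0 + X 1, X 2 + X 3, X 0 ^ 2 + X 1 ^ 2, X 2 ^ 2 + X 3 ^ 2, X 0 * X 3 + X 1 * X 2}

local notation "𝒜" => Algebra.adjoin R (doubleSwapGenerators R)

variable {R}

theorem rename_doubleSwap_eq_of_mem_adjoin {P : MvPolynomial (Fin 4) R} (hP : P ∈ 𝒜) :
    rename ![(1 : Fin 4), 0, 3, 2] P = P := by
  suffices 𝒜 ≤ AlgHom.equalizer (rename ![(1 : Fin 4), 0, 3, 2]) (AlgHom.id R _) from this hP
  refine Algebra.adjoin_le ?_
  simp only [doubleSwapGenerators, Set.insert_subset_iff, Set.singleton_subset_iff,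
    SetLike.mem_coe, AlgHom.mem_equalizer]
  refine ⟨?_, ?_, ?_, ?_, ?_⟩ <;> simp <;> ring

variable (R) in
theorem mem_adjoin_doubleSwapGenerators :
    X 0 + X 1 ∈ 𝒜 ∧ X 2 + X 3 ∈ 𝒜 ∧ X 0 ^ 2 + X 1 ^ 2 ∈ 𝒜 ∧ X 2 ^ 2 + X 3 ^ 2 ∈ 𝒜 ∧
      X 0 * X 3 + X 1 * X 2 ∈ 𝒜 := by
  refine ⟨?_, ?_, ?_, ?_, ?_⟩ <;> exact Algebra.subset_adjoin (by simp [doubleSwapGenerators])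

theorem X_sub_X_mul_mem_adjoin :
    (X 0 - X 1) * (X 0 - X 1) ∈ 𝒜 ∧ (X 0 - X 1) * (X 2 - X 3) ∈ 𝒜 ∧
      (X 2 - X 3) * (X 2 - X 3) ∈ 𝒜 := by
  obtain ⟨h₁, h₂, h₃, h₄, h₅⟩ := mem_adjoin_doubleSwapGenerators R
  have two_mem : (2 : MvPolynomial (Fin 4) R) ∈ 𝒜 := ofNat_mem _ 2
  refine ⟨?_, ?_, ?_⟩
  · convert sub_mem (mul_mem two_mem h₃) (mul_mem h₁ h₁) using 1; ring
  · convert sub_mem (mul_mem h₁ h₂) (mul_mem two_mem h₅) using 1; ring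
  · convert sub_mem (mul_mem two_mem h₄) (mul_mem h₂ h₂) using 1; ring

variable [Invertible (2 : R)]

local notation "𝒮" => Subalgebra.extendByPair 𝒜 (And.left X_sub_X_mul_mem_adjoin)
  (And.left (And.right X_sub_X_mul_mem_adjoin)) (And.right (And.right X_sub_X_mul_mem_adjoin))

theorem X_mem_extendByPair (i : Fin 4) : X i ∈ 𝒮 := by
  obtain ⟨h₁, h₂, -⟩ := mem_adjoin_doubleSwapGenerators R
  have half_mem : C (⅟2 : R) ∈ 𝒜 := Subalgebra.algebraMap_mem _ _
  have half_mul_two : C (⅟2 : R) * 2 = (1 : MvPolynomial (Fin 4) R) := by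
    rw [← map_ofNat C 2, ← C_mul, invOf_mul_self, C_1]
  match i with
  | 0 => exact ⟨_, mul_mem half_mem h₁, _, half_mem, 0, zero_mem _,
      by linear_combination (-X 0) * half_mul_two⟩
  | 1 => exact ⟨_, mul_mem half_mem h₁, _, neg_mem half_mem, 0, zero_mem _,
      by linear_combination (-X 1) * half_mul_two⟩
  | 2 => exact ⟨_, mul_mem half_mem h₂, 0, zero_mem _, _, half_mem,
      by linear_combination (-X 2) * half_mul_two⟩
  | 3 => exact ⟨_, mul_mem half_mem h₂, 0, zero_mem _, _, neg_mem half_mem,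
      by linear_combination (-X 3) * half_mul_two⟩

theorem mem_extendByPair_doubleSwap (P : MvPolynomial (Fin 4) R) : P ∈ 𝒮 := by
  have hP : P ∈ Algebra.adjoin R (Set.range X) := by rw [adjoin_range_X]; trivial
  exact Algebra.adjoin_le (Set.range_subset_iff.2 X_mem_extendByPair) hP

end DoubleSwap

theorem invariants_of_double_swap (P : MvPolynomial (Fin 4) ℚ) :
    rename ![(1 : Fin 4), 0, 3, 2] P = P ↔
      P ∈ Algebra.adjoin ℚ
        ({X 0 + X 1, X 2 + X 3, X 0 ^ 2 + X 1 ^ 2, X 2 ^ 2 + X 3 ^ 2,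
          X 0 * X 3 + X 1 * X 2} : Set (MvPolynomial (Fin 4) ℚ)) := by
  let : Invertible (2 : ℚ) := invertibleOfNonzero two_ne_zero
  refine ⟨fun hP => ?_, rename_doubleSwap_eq_of_mem_adjoin⟩
  exact Subalgebra.mem_of_mem_extendByPair_of_fixed
    (fun _ => rename_doubleSwap_eq_of_mem_adjoin) (by simp) (by simp)
    (mem_extendByPair_doubleSwap P) hP
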